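/- arXiv:1608.06063 — 3 statements merged into one kernel-verified Lean document; each statement's English description precedes it below -/
import Mathlib

section
/- With $R^{(l)}_m$, $U^{(l)}_m$ as above, and $X^{*(l)}_m$ (resp. $X^{(l)}_m$) the sum of weights of partial shortest paths from $(k,1)$ to $(l,m)$ (resp. from $(l,m)$ to $(1,n)$), one has $R^{(l)}_m = X^{*(l)}_m \cdot X^{(l)}_m$, and the identities $U^{(l)}_{m+1} = U^{(l+1)}_m + X^{*(l+1)}_m \cdot X^{(l+1)}_{m+1} \cdot \frac{x_{l+1,m}}{x_{l+1,m+1}}$ and $U^{(l-1)}_m = U^{(l-1)}_{m+1} + X^{*(l)}_m \cdot X^{(l-1)}_{m+1}$ and $V^{(l+1)}_{m+1} = V^{(l+1)}_m + X^{*(l+1)}_m \cdot X^{(l)}_{m+1}$. -/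
/- Lattice-path combinatorics on the weighted lattice `L₁[n,k]`.

A full shortest path from `(k,1)` to `(1,n)` is encoded by the strictly
increasing sequence `c : Fin (k+1) → Fin (n+2)` of its run boundaries (with
`c 0 = 1` and `c (last) = n+1`): the horizontal run on level `k - j` goes from
column `c j` to column `c (j+1) - 1`.  The run on level `l` (for `1 ≤ l ≤ k`)
thus occupies the columns `[c (k-l), c (k+1-l) - 1]`, so the path is strictly
above `(l,m)` iff `m < c (k-l)`, strictly below iff `c (k+1-l) ≤ m`, and
through `(l,m)` iff `c (k-l) ≤ m < c (k+1-l)`. -/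

attribute [local instance] Classical.propDecidable

noncomputable section

/-- Shortest partial paths from `(l,m)` to `(1,n)` on `L₁[n,k]`. -/
def pathsX (n l m : ℕ) : Finset (Fin (l + 1) → Fin (n + 2)) :=
  Finset.univ.filter fun c =>
    (c 0 : ℕ) = m ∧ StrictMono c ∧ (c (Fin.last l) : ℕ) = n + 1

/-- The weight of a path: product over its horizontal runs of `x_{i,start}/x_{i,end}`. -/
def wtX (x : ℕ → ℕ → ℚ) (l : ℕ) {n : ℕ} (c : Fin (l + 1) → Fin (n + 2)) : ℚ :=
  ∏ j : Fin l, x (l - (j : ℕ)) (c j.castSucc) / x (l - (j : ℕ)) ((c j.succ : ℕ) - 1)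

/-- `X^{(l)}_m`: the sum of the weights of all shortest paths from `(l,m)` to `(1,n)`.
In particular `ε = Xsum x n k 1` is the total sum over all full shortest paths. -/
def Xsum (x : ℕ → ℕ → ℚ) (n l m : ℕ) : ℚ :=
  ∑ c ∈ pathsX n l m, wtX x l c

/-- The `j`-th run boundary of a full path, as a natural number (clamped). -/
def cval {n k : ℕ} (c : Fin (k + 1) → Fin (n + 2)) (j : ℕ) : ℕ :=
  if h : j ≤ k then (c ⟨j, Nat.lt_succ_of_le h⟩ : ℕ) else n + 1

/-- `R^{(l)}_m`: sum of weights of full shortest paths through `(l,m)`. -/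
def Rsum (x : ℕ → ℕ → ℚ) (n k l m : ℕ) : ℚ :=
  ∑ c ∈ (pathsX n k 1).filter
      (fun c => cval c (k - l) ≤ m ∧ m < cval c (k + 1 - l)), wtX x k c

/-- `U^{(l)}_m`: sum of weights of full shortest paths strictly above `(l,m)`. -/
def Usum (x : ℕ → ℕ → ℚ) (n k l m : ℕ) : ℚ :=
  ∑ c ∈ (pathsX n k 1).filter (fun c => m < cval c (k - l)), wtX x k c

/-- `V^{(l)}_m`: sum of weights of full shortest paths strictly below `(l,m)`. -/
def Vsum (x : ℕ → ℕ → ℚ) (n k l m : ℕ) : ℚ :=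
  ∑ c ∈ (pathsX n k 1).filter (fun c => cval c (k + 1 - l) ≤ m), wtX x k c


/-- Shortest partial paths from `(k,1)` to `(l,m)` on `L₁[n,k]`: levels `k` down to
`l`, encoded by the run boundaries `c : Fin (k-l+1) → Fin (n+2)` with `c 0 = 1`,
the final run on level `l` going from column `c (last)` to column `m`. -/
def pathsXstar (n k l m : ℕ) : Finset (Fin (k - l + 1) → Fin (n + 2)) :=
  Finset.univ.filter fun c =>
    (c 0 : ℕ) = 1 ∧ StrictMono c ∧ (c (Fin.last (k - l)) : ℕ) ≤ m

/-- The weight of a partial path from `(k,1)` to `(l,m)`. -/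
def wtXstar (x : ℕ → ℕ → ℚ) (n k l m : ℕ) (c : Fin (k - l + 1) → Fin (n + 2)) : ℚ :=
  (∏ j : Fin (k - l),
      x (k - (j : ℕ)) (c j.castSucc) / x (k - (j : ℕ)) ((c j.succ : ℕ) - 1)) *
    (x l (c (Fin.last (k - l))) / x l m)

/-- `X^{*(l)}_m`: the sum of the weights of all shortest paths from `(k,1)` to `(l,m)`. -/
def XstarSum (x : ℕ → ℕ → ℚ) (n k l m : ℕ) : ℚ :=
  ∑ c ∈ pathsXstar n k l m, wtXstar x n k l m c

/-! Cutting a full path at level `l` is a bijection between the paths whose run on level `l`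
covers the columns `a, …, b` and the pairs (partial path from `(k,1)` to `(l,a)`, partial path
from `(l,b)` to `(1,n)`); the weights agree up to the factor `x_{l,a}/x_{l,b}` that replaces the
two cut runs by the joined one. For `a = b = m` this is `R = X* X`. Each of the three recurrences
compares two families of full paths that differ by the paths leaving level `l` at a prescribed
column (or by the paths covering `m, m+1` on level `l+1`), and these are counted by the
factorization together with the first-step recursion
`X^{(l)}_m = (x_{l,m}/x_{l,m+1}) X^{(l)}_{m+1} + X^{(l-1)}_{m+1}`. -/

lemma Finset.sum_filter_eq_add_of_iff {α β : Type*} [AddCommMonoid β] {s : Finset α}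
    {p q r : α → Prop} [DecidablePred p] [DecidablePred q] [DecidablePred r] (f : α → β)
    (h : ∀ a ∈ s, (p a ↔ q a ∨ r a) ∧ ¬(q a ∧ r a)) :
    ∑ a ∈ s.filter p, f a = ∑ a ∈ s.filter q, f a + ∑ a ∈ s.filter r, f a := by
  rw [← Finset.sum_union (Finset.disjoint_filter.2 fun a ha hq hr => (h a ha).2 ⟨hq, hr⟩),
    ← Finset.filter_or]
  exact Finset.sum_congr (Finset.filter_congr fun a ha => (h a ha).1) fun _ _ => rfl

section RunBoundaries

variable {n k l : ℕ}

lemma cval_of_le (c : Fin (k + 1) → Fin (n + 2)) {j : ℕ} (h : j ≤ k) :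
    cval c j = c ⟨j, Nat.lt_succ_of_le h⟩ :=
  dif_pos h

lemma cval_of_lt (c : Fin (k + 1) → Fin (n + 2)) {j : ℕ} (h : k < j) : cval c j = n + 1 :=
  dif_neg (by omega)

@[simp]
lemma cval_val (c : Fin (k + 1) → Fin (n + 2)) (j : Fin (k + 1)) : cval c j = c j :=
  cval_of_le c (Nat.lt_succ_iff.1 j.2)

@[simp]
lemma cval_zero (c : Fin (k + 1) → Fin (n + 2)) : cval c 0 = c 0 :=
  cval_of_le c (Nat.zero_le k)

lemma cval_le (c : Fin (k + 1) → Fin (n + 2)) (j : ℕ) : cval c j ≤ n + 1 := by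
  unfold cval
  split_ifs
  exacts [Nat.lt_succ_iff.1 (c _).2, le_rfl]

lemma ext_cval {c c' : Fin (k + 1) → Fin (n + 2)} (h : ∀ j ≤ k, cval c j = cval c' j) :
    c = c' :=
  funext fun j => Fin.ext (by simpa only [cval_val] using h j (Nat.lt_succ_iff.1 j.2))

lemma strictMono_iff_cval {c : Fin (k + 1) → Fin (n + 2)} :
    StrictMono c ↔ ∀ j < k, cval c j < cval c (j + 1) := by
  rw [Fin.strictMono_iff_lt_succ]
  refine ⟨fun h j hj => ?_, fun h i => ?_⟩
  · simpa [cval_of_le c hj.le, cval_of_le c hj] using h ⟨j, hj⟩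
  · have := h i i.2
    rwa [cval_of_le c i.2.le, cval_of_le c i.2] at this

lemma cval_lt_cval {c : Fin (k + 1) → Fin (n + 2)} (hc : StrictMono c) {i j : ℕ} (hij : i < j)
    (hj : j ≤ k) : cval c i < cval c j := by
  rw [cval_of_le c hj, cval_of_le c (hij.le.trans hj)]
  exact hc (Fin.mk_lt_mk.2 hij)

lemma mem_pathsX_iff {m : ℕ} {c : Fin (l + 1) → Fin (n + 2)} :
    c ∈ pathsX n l m ↔
      cval c 0 = m ∧ (∀ j < l, cval c j < cval c (j + 1)) ∧ cval c l = n + 1 := by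
  simp [pathsX, strictMono_iff_cval, cval_of_le c le_rfl, Fin.last]

lemma mem_pathsXstar_iff {a : ℕ} {c : Fin (k - l + 1) → Fin (n + 2)} :
    c ∈ pathsXstar n k l a ↔
      cval c 0 = 1 ∧ (∀ j < k - l, cval c j < cval c (j + 1)) ∧ cval c (k - l) ≤ a := by
  simp [pathsXstar, strictMono_iff_cval, cval_of_le c le_rfl, Fin.last]

lemma wtX_eq_prod (x : ℕ → ℕ → ℚ) (c : Fin (k + 1) → Fin (n + 2)) :
    wtX x k c = ∏ j ∈ Finset.range k, x (k - j) (cval c j) / x (k - j) (cval c (j + 1) - 1) := by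
  rw [wtX, ← Fin.prod_univ_eq_prod_range]
  exact Finset.prod_congr rfl fun j _ => by rw [cval_of_le c j.2.le, cval_of_le c j.2]; rfl

lemma wtXstar_eq_prod (x : ℕ → ℕ → ℚ) (a : ℕ) (c : Fin (k - l + 1) → Fin (n + 2)) :
    wtXstar x n k l a c =
      (∏ j ∈ Finset.range (k - l), x (k - j) (cval c j) / x (k - j) (cval c (j + 1) - 1)) *
        (x l (cval c (k - l)) / x l a) := by
  rw [wtXstar, ← Fin.prod_univ_eq_prod_range]
  congr 1
  · exact Finset.prod_congr rfl fun j _ => by rw [cval_of_le c j.2.le, cval_of_le c j.2]; rfl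
  · simp [cval_of_le c le_rfl, Fin.last]

end RunBoundaries

section FirstStep

variable {n l : ℕ}

lemma cval_tail (c : Fin (l + 2) → Fin (n + 2)) (j : ℕ) :
    cval (Fin.tail c) j = cval c (j + 1) := by
  rcases le_or_gt j l with h | h
  · rw [cval_of_le _ h, cval_of_le c (by omega)]
    rfl
  · rw [cval_of_lt _ h, cval_of_lt c (by omega)]

lemma cval_cons_one (a : Fin (n + 2)) (d : Fin (l + 1) → Fin (n + 2)) :
    cval (Fin.cons a d : Fin (l + 2) → Fin (n + 2)) 1 = cval d 0 := by
  rw [← cval_tail, Fin.tail_cons]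

lemma mem_pathsX_succ_iff {m : ℕ} {c : Fin (l + 2) → Fin (n + 2)} :
    c ∈ pathsX n (l + 1) m ↔
      cval c 0 = m ∧ m < cval c 1 ∧ Fin.tail c ∈ pathsX n l (cval c 1) := by
  rw [mem_pathsX_iff, mem_pathsX_iff]
  simp only [cval_tail, zero_add, true_and]
  constructor
  · rintro ⟨h0, hmono, hlast⟩
    exact ⟨h0, h0 ▸ hmono 0 l.succ_pos, fun j hj => hmono (j + 1) (by omega), hlast⟩
  · rintro ⟨h0, h01, hmono, hlast⟩
    refine ⟨h0, fun j hj => ?_, hlast⟩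
    rcases j with _ | j
    · exact h0 ▸ h01
    · exact hmono j (by omega)

lemma wtX_succ (x : ℕ → ℕ → ℚ) (c : Fin (l + 2) → Fin (n + 2)) :
    wtX x (l + 1) c =
      x (l + 1) (cval c 0) / x (l + 1) (cval c 1 - 1) * wtX x l (Fin.tail c) := by
  simp only [wtX_eq_prod, Finset.prod_range_succ', cval_tail, Nat.add_sub_add_right,
    Nat.sub_zero, zero_add]
  ring

lemma Xsum_succ (x : ℕ → ℕ → ℚ) {m : ℕ} (hm : m ≤ n + 1) :
    Xsum x n (l + 1) m =
      ∑ v ∈ Finset.Ioc m (n + 1), x (l + 1) m / x (l + 1) (v - 1) * Xsum x n l v := by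
  rw [Xsum, ← Finset.sum_fiberwise_of_maps_to (g := fun c => cval c 1)
    (t := Finset.Ioc m (n + 1)) fun c hc => ?_]
  · refine Finset.sum_congr rfl fun v hv => ?_
    rw [Xsum, Finset.mul_sum]
    refine Finset.sum_nbij' Fin.tail
      (fun d => (Fin.cons ⟨m, by omega⟩ d : Fin (l + 2) → Fin (n + 2)))
      (fun c hc => ?_) (fun d hd => ?_) (fun c hc => ?_) (fun d _ => Fin.tail_cons _ _)
      (fun c hc => ?_)
    · simp only [Finset.mem_filter, mem_pathsX_succ_iff] at hc
      exact hc.2 ▸ hc.1.2.2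
    · have hd0 := (mem_pathsX_iff.1 hd).1
      rw [Finset.mem_filter, mem_pathsX_succ_iff, Fin.tail_cons, cval_cons_one, cval_zero,
        Fin.cons_zero, hd0]
      exact ⟨⟨rfl, (Finset.mem_Ioc.1 hv).1, hd⟩, rfl⟩
    · simp only [Finset.mem_filter, mem_pathsX_succ_iff, cval_zero] at hc
      conv_rhs => rw [← Fin.cons_self_tail c]
      congr 1
      exact Fin.ext hc.1.1.symm
    · simp only [Finset.mem_filter, mem_pathsX_succ_iff] at hc
      rw [wtX_succ, hc.1.1, hc.2]
  · simp only [mem_pathsX_succ_iff] at hc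
    exact Finset.mem_Ioc.2 ⟨hc.2.1, cval_le c 1⟩

lemma Xsum_succ_eq (x : ℕ → ℕ → ℚ) {m : ℕ} (hm : m + 1 ≤ n + 1)
    (hxm : x (l + 1) m ≠ 0) (hxm' : x (l + 1) (m + 1) ≠ 0) :
    Xsum x n (l + 1) m =
      x (l + 1) m / x (l + 1) (m + 1) * Xsum x n (l + 1) (m + 1) + Xsum x n l (m + 1) := by
  rw [Xsum_succ x (by omega), Xsum_succ x hm, ← Finset.Icc_add_one_left_eq_Ioc,
    ← Finset.Ioc_insert_left hm, Finset.sum_insert Finset.left_notMem_Ioc, Nat.add_sub_cancel,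
    div_self hxm, one_mul, add_comm, Finset.mul_sum]
  congr 1
  refine Finset.sum_congr rfl fun v _ => ?_
  rw [← mul_assoc, div_mul_div_cancel₀ hxm']

end FirstStep

section Gluing

variable {n k l : ℕ}

def mkPath (l : ℕ) (f : ℕ → ℕ) (hf : ∀ j, f j ≤ n + 1) : Fin (l + 1) → Fin (n + 2) :=
  fun j => ⟨f j, Nat.lt_succ_of_le (hf j)⟩

lemma cval_mkPath {f : ℕ → ℕ} {hf : ∀ j, f j ≤ n + 1} {j : ℕ} (hj : j ≤ l) :
    cval (mkPath l f hf) j = f j := by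
  rw [cval_of_le _ hj]
  rfl

def glue (k l : ℕ) (c : Fin (k - l + 1) → Fin (n + 2)) (d : Fin (l + 1) → Fin (n + 2)) :
    Fin (k + 1) → Fin (n + 2) :=
  mkPath k (fun j => if j ≤ k - l then cval c j else cval d (j - (k - l))) fun j => by
    split_ifs <;> apply cval_le

def splitL (l : ℕ) (c : Fin (k + 1) → Fin (n + 2)) : Fin (k - l + 1) → Fin (n + 2) :=
  mkPath (k - l) (cval c) (cval_le c)

def splitR (l b : ℕ) (hb : b ≤ n + 1) (c : Fin (k + 1) → Fin (n + 2)) :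
    Fin (l + 1) → Fin (n + 2) :=
  mkPath l (fun j => if j = 0 then b else cval c (k - l + j)) fun j => by
    split_ifs
    exacts [hb, cval_le c _]

lemma cval_glue {c : Fin (k - l + 1) → Fin (n + 2)} {d : Fin (l + 1) → Fin (n + 2)} {j : ℕ}
    (hj : j ≤ k) :
    cval (glue k l c d) j = if j ≤ k - l then cval c j else cval d (j - (k - l)) :=
  cval_mkPath hj

lemma cval_splitL {c : Fin (k + 1) → Fin (n + 2)} {j : ℕ} (hj : j ≤ k - l) :
    cval (splitL l c) j = cval c j :=
  cval_mkPath hj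

lemma cval_splitR {b : ℕ} {hb : b ≤ n + 1} {c : Fin (k + 1) → Fin (n + 2)} {j : ℕ}
    (hj : j ≤ l) :
    cval (splitR l b hb c) j = if j = 0 then b else cval c (k - l + j) :=
  cval_mkPath hj

end Gluing

section Factorization

variable {n k l a b : ℕ}

-- Full paths whose run on level `l` covers the columns `a, …, b`.
def spanSum (x : ℕ → ℕ → ℚ) (n k l a b : ℕ) : ℚ :=
  ∑ c ∈ (pathsX n k 1).filter (fun c => cval c (k - l) ≤ a ∧ b < cval c (k + 1 - l)),
    wtX x k c

lemma glue_mem (hl : 1 ≤ l) (hlk : l ≤ k) (hab : a ≤ b) {c : Fin (k - l + 1) → Fin (n + 2)}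
    {d : Fin (l + 1) → Fin (n + 2)} (hc : c ∈ pathsXstar n k l a) (hd : d ∈ pathsX n l b) :
    glue k l c d ∈
      (pathsX n k 1).filter (fun c => cval c (k - l) ≤ a ∧ b < cval c (k + 1 - l)) := by
  obtain ⟨hc0, hcmono, hclast⟩ := mem_pathsXstar_iff.1 hc
  obtain ⟨hd0, hdmono, hdlast⟩ := mem_pathsX_iff.1 hd
  have hd1 := hdmono 0 (by omega)
  simp only [Finset.mem_filter, mem_pathsX_iff]
  refine ⟨⟨?_, fun j hj => ?_, ?_⟩, ?_, ?_⟩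
  · rw [cval_glue (Nat.zero_le k), if_pos (Nat.zero_le _), hc0]
  · rw [cval_glue hj.le, cval_glue hj]
    split_ifs with h₁ h₂ h₂
    · exact hcmono j (by omega)
    · -- the joint: `c (k - l) ≤ a ≤ b = d 0 < d 1`
      obtain rfl : j = k - l := by omega
      rw [show k - l + 1 - (k - l) = 0 + 1 by omega]
      omega
    · omega
    · rw [show j + 1 - (k - l) = j - (k - l) + 1 by omega]
      exact hdmono _ (by omega)
  · rw [cval_glue le_rfl, if_neg (by omega), show k - (k - l) = l by omega, hdlast]
  · rw [cval_glue (by omega), if_pos le_rfl]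
    exact hclast
  · rw [cval_glue (by omega), if_neg (by omega), show k + 1 - l - (k - l) = 0 + 1 by omega]
    omega

lemma splitL_mem {c : Fin (k + 1) → Fin (n + 2)}
    (hc : c ∈ (pathsX n k 1).filter (fun c => cval c (k - l) ≤ a ∧ b < cval c (k + 1 - l))) :
    splitL l c ∈ pathsXstar n k l a := by
  obtain ⟨⟨hc0, hcmono, -⟩, hca, -⟩ := Finset.mem_filter.1 hc |>.imp_left mem_pathsX_iff.1
  refine mem_pathsXstar_iff.2 ⟨?_, fun j hj => ?_, ?_⟩
  · rw [cval_splitL (Nat.zero_le _), hc0]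
  · rw [cval_splitL hj.le, cval_splitL hj]
    exact hcmono j (by omega)
  · rwa [cval_splitL le_rfl]

lemma splitR_mem (hl : 1 ≤ l) (hlk : l ≤ k) (hb : b ≤ n + 1)
    {c : Fin (k + 1) → Fin (n + 2)}
    (hc : c ∈ (pathsX n k 1).filter (fun c => cval c (k - l) ≤ a ∧ b < cval c (k + 1 - l))) :
    splitR l b hb c ∈ pathsX n l b := by
  obtain ⟨⟨-, hcmono, hclast⟩, -, hcb⟩ := Finset.mem_filter.1 hc |>.imp_left mem_pathsX_iff.1
  refine mem_pathsX_iff.2 ⟨?_, fun j hj => ?_, ?_⟩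
  · rw [cval_splitR (Nat.zero_le _), if_pos rfl]
  · rw [cval_splitR hj.le, cval_splitR hj, if_neg j.succ_ne_zero]
    split_ifs with h
    · subst h
      rwa [show k - l + (0 + 1) = k + 1 - l by omega]
    · exact hcmono _ (by omega)
  · rw [cval_splitR le_rfl, if_neg (by omega), show k - l + l = k by omega, hclast]

lemma splitL_glue (c : Fin (k - l + 1) → Fin (n + 2)) (d : Fin (l + 1) → Fin (n + 2)) :
    splitL l (glue k l c d) = c :=
  ext_cval fun j hj => by rw [cval_splitL hj, cval_glue (by omega), if_pos hj]

lemma splitR_glue (hlk : l ≤ k) (hb : b ≤ n + 1) (c : Fin (k - l + 1) → Fin (n + 2))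
    {d : Fin (l + 1) → Fin (n + 2)} (hd : cval d 0 = b) :
    splitR l b hb (glue k l c d) = d :=
  ext_cval fun j hj => by
    rw [cval_splitR hj]
    split_ifs with h
    · rw [h, hd]
    · rw [cval_glue (by omega), if_neg (by omega), Nat.add_sub_cancel_left]

lemma glue_split (hb : b ≤ n + 1) (c : Fin (k + 1) → Fin (n + 2)) :
    glue k l (splitL l c) (splitR l b hb c) = c :=
  ext_cval fun j hj => by
    rw [cval_glue hj]
    split_ifs with h
    · exact cval_splitL h
    · rw [cval_splitR (by omega), if_neg (by omega), Nat.add_sub_cancel' (by omega)]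

lemma wtX_glue (x : ℕ → ℕ → ℚ) (hl : 1 ≤ l) (hlk : l ≤ k) (hxa : x l a ≠ 0) (hxb : x l b ≠ 0)
    (c : Fin (k - l + 1) → Fin (n + 2)) {d : Fin (l + 1) → Fin (n + 2)} (hd : cval d 0 = b) :
    wtX x k (glue k l c d) = wtXstar x n k l a c * wtX x l d * (x l a / x l b) := by
  obtain ⟨l, rfl⟩ : ∃ l', l = l' + 1 := ⟨l - 1, by omega⟩
  have hk : Finset.range k = Finset.range (k - (l + 1) + (l + 1)) := by
    rw [Nat.sub_add_cancel hlk]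
  have hleft : ∀ j ∈ Finset.range (k - (l + 1)),
      x (k - j) (cval (glue k (l + 1) c d) j) / x (k - j) (cval (glue k (l + 1) c d) (j + 1) - 1) =
        x (k - j) (cval c j) / x (k - j) (cval c (j + 1) - 1) := fun j hj => by
    have := Finset.mem_range.1 hj
    rw [cval_glue (by omega), cval_glue (by omega), if_pos (by omega), if_pos (by omega)]
  have hright : ∀ i ∈ Finset.range l,
      x (k - (k - (l + 1) + (i + 1))) (cval (glue k (l + 1) c d) (k - (l + 1) + (i + 1))) /
          x (k - (k - (l + 1) + (i + 1)))
            (cval (glue k (l + 1) c d) (k - (l + 1) + (i + 1) + 1) - 1) =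
        x (l + 1 - (i + 1)) (cval d (i + 1)) / x (l + 1 - (i + 1)) (cval d (i + 1 + 1) - 1) :=
    fun i hi => by
      have := Finset.mem_range.1 hi
      rw [cval_glue (by omega), cval_glue (by omega), if_neg (by omega), if_neg (by omega),
        show k - (k - (l + 1) + (i + 1)) = l + 1 - (i + 1) by omega, Nat.add_sub_cancel_left,
        show k - (l + 1) + (i + 1) + 1 = k - (l + 1) + (i + 1 + 1) by omega,
        Nat.add_sub_cancel_left]
  have hjoint : cval (glue k (l + 1) c d) (k - (l + 1) + 0) = cval c (k - (l + 1)) ∧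
      cval (glue k (l + 1) c d) (k - (l + 1) + 0 + 1) = cval d 1 := by
    rw [cval_glue (by omega), cval_glue (by omega), if_pos (by omega), if_neg (by omega),
      add_zero, Nat.add_sub_cancel_left]
    exact ⟨rfl, rfl⟩
  rw [wtX_eq_prod, wtX_eq_prod, wtXstar_eq_prod, Finset.prod_range_succ' _ l, hk,
    Finset.prod_range_add, Finset.prod_range_succ', Finset.prod_congr rfl hleft, Finset.prod_congr rfl hright, hjoint.1, hjoint.2, hd,
    show k - (k - (l + 1) + 0) = l + 1 by omega, Nat.sub_zero, zero_add]
  field_simp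

lemma spanSum_eq (x : ℕ → ℕ → ℚ) (hl : 1 ≤ l) (hlk : l ≤ k) (hab : a ≤ b) (hb : b ≤ n + 1)
    (hxa : x l a ≠ 0) (hxb : x l b ≠ 0) :
    spanSum x n k l a b = XstarSum x n k l a * Xsum x n l b * (x l a / x l b) := by
  rw [spanSum, XstarSum, Xsum, Finset.sum_mul_sum, ← Finset.sum_product', Finset.sum_mul]
  symm
  refine Finset.sum_nbij' (fun p => glue k l p.1 p.2) (fun c => (splitL l c, splitR l b hb c))
    (fun p hp => ?_) (fun c hc => ?_) (fun p hp => ?_) (fun c _ => glue_split hb c) (fun p hp => ?_)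
  · exact glue_mem hl hlk hab (Finset.mem_product.1 hp).1 (Finset.mem_product.1 hp).2
  · exact Finset.mem_product.2 ⟨splitL_mem hc, splitR_mem hl hlk hb hc⟩
  · have hd := (mem_pathsX_iff.1 (Finset.mem_product.1 hp).2).1
    exact Prod.ext (splitL_glue _ _) (splitR_glue hlk hb _ hd)
  · have hd := (mem_pathsX_iff.1 (Finset.mem_product.1 hp).2).1
    exact (wtX_glue x hl hlk hxa hxb _ hd).symm

end Factorization

section Decompositions

variable {x : ℕ → ℕ → ℚ} {n k l m : ℕ}

-- Full paths whose run on level `l` ends at column `m`.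
def climbSum (x : ℕ → ℕ → ℚ) (n k l m : ℕ) : ℚ :=
  ∑ c ∈ (pathsX n k 1).filter (fun c => cval c (k + 1 - l) = m + 1), wtX x k c

lemma cval_sub_lt_cval {c : Fin (k + 1) → Fin (n + 2)} (hc : c ∈ pathsX n k 1) (hl : 1 ≤ l)
    (hlk : l ≤ k) : cval c (k - l) < cval c (k + 1 - l) :=
  cval_lt_cval (Finset.mem_filter.1 hc).2.2.1 (by omega) (by omega)

lemma Usum_pred_eq (hl : 1 ≤ l) :
    Usum x n k (l - 1) m = Usum x n k (l - 1) (m + 1) + climbSum x n k l m := by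
  rw [Usum, Usum, climbSum, show k - (l - 1) = k + 1 - l by omega]
  exact Finset.sum_filter_eq_add_of_iff _ fun c _ => by omega

lemma Vsum_succ_eq : Vsum x n k l (m + 1) = Vsum x n k l m + climbSum x n k l m :=
  Finset.sum_filter_eq_add_of_iff _ fun c _ => by omega

lemma Usum_succ_eq (hlk : l + 1 ≤ k) :
    Usum x n k l (m + 1) = Usum x n k (l + 1) m + spanSum x n k (l + 1) m (m + 1) := by
  refine Finset.sum_filter_eq_add_of_iff _ fun c hc => ?_
  have := cval_sub_lt_cval hc (Nat.le_add_left 1 l) hlk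
  rw [show k + 1 - (l + 1) = k - l by omega] at this ⊢
  omega

lemma spanSum_eq_add_climbSum (hl : 1 ≤ l) (hlk : l ≤ k) :
    spanSum x n k l m m = spanSum x n k l m (m + 1) + climbSum x n k l m := by
  refine Finset.sum_filter_eq_add_of_iff _ fun c hc => ?_
  have := cval_sub_lt_cval hc hl hlk
  omega

lemma climbSum_eq (hl : 1 ≤ l) (hlk : l ≤ k) (hm : m + 1 ≤ n + 1) (hxm : x l m ≠ 0)
    (hxm' : x l (m + 1) ≠ 0) :
    climbSum x n k l m = XstarSum x n k l m * Xsum x n (l - 1) (m + 1) := by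
  have h := spanSum_eq_add_climbSum (x := x) (n := n) (m := m) hl hlk
  obtain ⟨l, rfl⟩ : ∃ l', l = l' + 1 := ⟨l - 1, by omega⟩
  rw [spanSum_eq x hl hlk le_rfl (by omega) hxm hxm,
    spanSum_eq x hl hlk (Nat.le_succ m) hm hxm hxm', Xsum_succ_eq x hm hxm hxm', div_self hxm]
    at h
  rw [Nat.add_sub_cancel]
  linear_combination -h

end Decompositions

theorem stmt2_general (n k l m : ℕ) (hl : 1 ≤ l) (hlk : l + 1 ≤ k) (hkl : k < l + m)
    (hmn : l + m + 2 ≤ n + 1)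
    (x : ℕ → ℕ → ℚ)
    (hx : ∀ i j, 1 ≤ i → i ≤ k → k < i + j → i + j ≤ n + 1 → 0 < x i j) :
    Rsum x n k l m = XstarSum x n k l m * Xsum x n l m ∧
    Usum x n k l (m + 1) =
      Usum x n k (l + 1) m +
        XstarSum x n k (l + 1) m * Xsum x n (l + 1) (m + 1) *
          (x (l + 1) m / x (l + 1) (m + 1)) ∧
    Usum x n k (l - 1) m =
      Usum x n k (l - 1) (m + 1) + XstarSum x n k l m * Xsum x n (l - 1) (m + 1) ∧
    Vsum x n k (l + 1) (m + 1) =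
      Vsum x n k (l + 1) m + XstarSum x n k (l + 1) m * Xsum x n l (m + 1) := by
  have hx₀₀ : x l m ≠ 0 := (hx _ _ (by omega) (by omega) (by omega) (by omega)).ne'
  have hx₀₁ : x l (m + 1) ≠ 0 := (hx _ _ (by omega) (by omega) (by omega) (by omega)).ne'
  have hx₁₀ : x (l + 1) m ≠ 0 := (hx _ _ (by omega) (by omega) (by omega) (by omega)).ne'
  have hx₁₁ : x (l + 1) (m + 1) ≠ 0 := (hx _ _ (by omega) (by omega) (by omega) (by omega)).ne'
  refine ⟨?_, ?_, ?_, ?_⟩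
  · rw [show Rsum x n k l m = spanSum x n k l m m from rfl,
      spanSum_eq x hl (by omega) le_rfl (by omega) hx₀₀ hx₀₀, div_self hx₀₀, mul_one]
  · rw [Usum_succ_eq hlk, spanSum_eq x (by omega) hlk (Nat.le_succ m) (by omega) hx₁₀ hx₁₁]
  · rw [Usum_pred_eq hl, climbSum_eq hl (by omega) (by omega) hx₀₀ hx₀₁]
  · rw [Vsum_succ_eq, climbSum_eq (by omega) hlk (by omega) hx₁₀ hx₁₁, Nat.add_sub_cancel]

/-- `R^{(l)}_m = X^{*(l)}_m ⬝ X^{(l)}_m`, together with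
`U^{(l)}_{m+1} = U^{(l+1)}_m + X^{*(l+1)}_m ⬝ X^{(l+1)}_{m+1} ⬝ x_{l+1,m}/x_{l+1,m+1}`,
`U^{(l-1)}_m = U^{(l-1)}_{m+1} + X^{*(l)}_m ⬝ X^{(l-1)}_{m+1}`, and
`V^{(l+1)}_{m+1} = V^{(l+1)}_m + X^{*(l+1)}_m ⬝ X^{(l)}_{m+1}`. -/
theorem stmt2 (n k l m : ℕ) (hk : 1 ≤ k) (hkn : k ≤ n)
    (hl : 1 ≤ l) (hlk : l + 1 ≤ k) (hkl : k < l + m) (hmn : l + m + 2 ≤ n + 1)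
    (x : ℕ → ℕ → ℚ)
    (hx : ∀ i j, 1 ≤ i → i ≤ k → k < i + j → i + j ≤ n + 1 → 0 < x i j) :
    Rsum x n k l m = XstarSum x n k l m * Xsum x n l m ∧
    Usum x n k l (m + 1) =
      Usum x n k (l + 1) m +
        XstarSum x n k (l + 1) m * Xsum x n (l + 1) (m + 1) *
          (x (l + 1) m / x (l + 1) (m + 1)) ∧
    Usum x n k (l - 1) m =
      Usum x n k (l - 1) (m + 1) + XstarSum x n k l m * Xsum x n (l - 1) (m + 1) ∧
    Vsum x n k (l + 1) (m + 1) =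
      Vsum x n k (l + 1) m + XstarSum x n k (l + 1) m * Xsum x n l (m + 1) :=
  stmt2_general n k l m hl hlk hkl hmn x hx
end
end

section
/- Let $X$ be a set with rational $\mathbb{C}^\times$-actions $e_i^c$ and rational functions $\gamma_i$ satisfying the geometric crystal axioms, including $\gamma_j(e_i^c(x)) = c^{a_{ij}} \gamma_j(x)$ and the Verma relations. Define $s_i(x) := e_i^{\gamma_i(x)^{-1}}(x)$. Then $s_i^2 = \mathrm{id}$; if $a_{ij} = a_{ji} = 0$ then $s_i s_j = s_j s_i$; and if $a_{ij} = a_{ji} = -1$ then $s_i s_j s_i = s_j s_i s_j$. -/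
/-- The Weyl group action `s_i(x) := e_i^{γ_i(x)⁻¹}(x)` on a geometric crystal. -/
def WeylS {X I : Type*} (e : I → ℂˣ → X → X) (γ : I → X → ℂˣ) (i : I) (x : X) : X :=
  e i (γ i x)⁻¹ x

/-- Berenstein–Kazhdan: for a geometric crystal
`(X, {e_i}, {γ_i}, {ε_i})` attached to a Cartan matrix `(a_{ij})`
(with `a_{ii} = 2`, the `e_i` honest `ℂˣ`-actions, `γ_j(e_i^c x) = c^{a_{ij}} γ_j(x)`,
and the Verma relations), the maps `s_i(x) = e_i^{γ_i(x)⁻¹}(x)` satisfy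
`s_i² = id`, `s_i s_j = s_j s_i` when `a_{ij} = a_{ji} = 0`, and the braid
relation `s_i s_j s_i = s_j s_i s_j` when `a_{ij} = a_{ji} = -1`. -/
theorem stmt12 {X I : Type*} (a : I → I → ℤ)
    (e : I → ℂˣ → X → X) (γ : I → X → ℂˣ)
    (haii : ∀ i, a i i = 2)
    (hone : ∀ i x, e i 1 x = x)
    (hcomp : ∀ i c₁ c₂ x, e i c₁ (e i c₂ x) = e i (c₁ * c₂) x)
    (hγ : ∀ i j c x, γ j (e i c x) = c ^ (a i j) * γ j x)
    (hcomm : ∀ i j, a i j = 0 → a j i = 0 →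
      ∀ c₁ c₂ x, e i c₁ (e j c₂ x) = e j c₂ (e i c₁ x))
    (hverma : ∀ i j, a i j = -1 → a j i = -1 →
      ∀ c₁ c₂ x, e i c₁ (e j (c₁ * c₂) (e i c₂ x)) = e j c₂ (e i (c₁ * c₂) (e j c₁ x))) :
    (∀ i x, WeylS e γ i (WeylS e γ i x) = x) ∧
    (∀ i j, a i j = 0 → a j i = 0 →
      ∀ x, WeylS e γ i (WeylS e γ j x) = WeylS e γ j (WeylS e γ i x)) ∧
    (∀ i j, a i j = -1 → a j i = -1 →
      ∀ x, WeylS e γ i (WeylS e γ j (WeylS e γ i x)) =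
        WeylS e γ j (WeylS e γ i (WeylS e γ j x))) := by
  refine ⟨?_, ?_, ?_⟩
  · intro i x
    simp only [WeylS, hγ, haii]
    rw [show (((γ i x)⁻¹ ^ (2:ℤ) * γ i x)⁻¹ : ℂˣ) = γ i x by simp [zpow_neg_one, zpow_two, pow_two, mul_comm, mul_left_comm, mul_assoc], hcomp,
      mul_inv_cancel, hone]
  · intro i j hij hji x
    simp only [WeylS, hγ, hij, hji, zpow_zero, one_mul]
    exact hcomm i j hij hji _ _ x
  · intro i j hij hji x
    simp only [WeylS, hγ, hij, hji, haii]
    set α := γ i x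
    set β := γ j x
    rw [show ((α⁻¹ ^ (-1:ℤ) * β)⁻¹ ^ (-1:ℤ) * (α⁻¹ ^ (2:ℤ) * α))⁻¹ = β⁻¹ by simp [zpow_neg_one, zpow_two, pow_two, mul_comm, mul_left_comm, mul_assoc],
      show ((α⁻¹ ^ (-1:ℤ) * β)⁻¹ : ℂˣ) = β⁻¹ * α⁻¹ by simp [zpow_neg_one, zpow_two, pow_two, mul_comm, mul_left_comm, mul_assoc],
      show ((β⁻¹ ^ (-1:ℤ) * α)⁻¹ ^ (-1:ℤ) * (β⁻¹ ^ (2:ℤ) * β))⁻¹ = α⁻¹ by simp [zpow_neg_one, zpow_two, pow_two, mul_comm, mul_left_comm, mul_assoc],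
      show ((β⁻¹ ^ (-1:ℤ) * α)⁻¹ : ℂˣ) = β⁻¹ * α⁻¹ by simp [zpow_neg_one, zpow_two, pow_two, mul_comm, mul_left_comm, mul_assoc]]
    exact hverma i j hij hji β⁻¹ α⁻¹ x
end

section
/- Let $(B, \{\tilde e_i\}, \{\mathrm{wt}_i\})$ be a crystal obtained by ultra-discretization, where $\tilde e_i : \mathbb{Z} \times B \to B$ satisfies $\tilde e_i^{d_1}\tilde e_i^{d_2} = \tilde e_i^{d_1+d_2}$, $\mathrm{wt}_j(\tilde e_i^d(b)) = \mathrm{wt}_j(b) + d\, a_{ij}$, and, when $a_{ij} = a_{ji} = -1$, $\tilde e_i^{d_1}\tilde e_j^{d_1+d_2}\tilde e_i^{d_2} = \tilde e_j^{d_2}\tilde e_i^{d_1+d_2}\tilde e_j^{d_1}$ (with commutation when $a_{ij} = a_{ji} = 0$). Define $\tilde s_i(b) := \tilde e_i^{-\mathrm{wt}_i(b)}(b)$. Then the $\tilde s_i$ satisfy the Weyl group relations: $\tilde s_i^2 = \mathrm{id}$, $\tilde s_i \tilde s_j = \tilde s_j \tilde s_i$ if $a_{ij} = a_{ji} = 0$,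 and $\tilde s_i \tilde s_j \tilde s_i = \tilde s_j \tilde s_i \tilde s_j$ if $a_{ij} = a_{ji} = -1$. -/
/-- The piecewise-linear Weyl action `s̃_i(b) := ẽ_i^{-wt_i(b)}(b)` on an
ultra-discretized crystal. -/
def WeylSt {B I : Type*} (e : I → ℤ → B → B) (w : I → B → ℤ) (i : I) (b : B) : B :=
  e i (-(w i b)) b

/-- for a crystal `(B, {ẽ_i}, {wt_i})` obtained by
ultra-discretization (so the `ẽ_i` are `ℤ`-actions with
`wt_j(ẽ_i^d b) = wt_j(b) + d a_{ij}`, commuting when `a_{ij} = a_{ji} = 0`,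
and satisfying the tropical Verma relation when `a_{ij} = a_{ji} = -1`), the
maps `s̃_i(b) = ẽ_i^{-wt_i(b)}(b)` satisfy the Weyl group relations:
`s̃_i² = id`, commutation when `a_{ij} = a_{ji} = 0`, and the braid relation
when `a_{ij} = a_{ji} = -1`. -/
theorem stmt13 {B I : Type*} (a : I → I → ℤ)
    (e : I → ℤ → B → B) (w : I → B → ℤ)
    (haii : ∀ i, a i i = 2)
    (hzero : ∀ i b, e i 0 b = b)
    (hcomp : ∀ i d₁ d₂ b, e i d₁ (e i d₂ b) = e i (d₁ + d₂) b)
    (hw : ∀ i j d b, w j (e i d b) = w j b + d * a i j)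
    (hcomm : ∀ i j, a i j = 0 → a j i = 0 →
      ∀ d₁ d₂ b, e i d₁ (e j d₂ b) = e j d₂ (e i d₁ b))
    (hverma : ∀ i j, a i j = -1 → a j i = -1 →
      ∀ d₁ d₂ b, e i d₁ (e j (d₁ + d₂) (e i d₂ b)) = e j d₂ (e i (d₁ + d₂) (e j d₁ b))) :
    (∀ i b, WeylSt e w i (WeylSt e w i b) = b) ∧
    (∀ i j, a i j = 0 → a j i = 0 →
      ∀ b, WeylSt e w i (WeylSt e w j b) = WeylSt e w j (WeylSt e w i b)) ∧
    (∀ i j, a i j = -1 → a j i = -1 →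
      ∀ b, WeylSt e w i (WeylSt e w j (WeylSt e w i b)) =
        WeylSt e w j (WeylSt e w i (WeylSt e w j b))) := by
  refine ⟨?_, ?_, ?_⟩
  · intro i b
    simp only [WeylSt, hw, haii]
    have : -(w i b + -w i b * 2) = w i b := by ring
    rw [this, hcomp]
    simpa using hzero i b
  · intro i j hij hji b
    simp only [WeylSt, hw, hij, hji, mul_zero, add_zero]
    exact hcomm i j hij hji _ _ b
  · intro i j hij hji b
    simp only [WeylSt, hw, hij, hji, haii]
    have key := hverma i j hij hji (-w j b) (-w i b) b
    convert key using 3 <;> ring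
end
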